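/- arXiv:2509.15184 — 9 statements merged into one kernel-verified Lean document; each statement's English description precedes it below -/
import Mathlib

section
/- Let n ≥ 2 be a natural number and let λ > 0, λ_e > 0 be real numbers. Let v : ℕ → ℝ satisfy, for every j with 1 ≤ j ≤ n, the recursion v(j) = (λ_e + j(n−j)(λ/n)·v(j+1)) / (j·λ/n + j·λ/n + j(n−j)·λ/n). Then v(1) ≤ (λ_e/λ)·(ln n + 1). -/
lemma harm_mono' : Monotone (fun n => ((harmonic n : ℚ) : ℝ)) := by
  apply monotone_nat_of_le_succ
  intro n
  simp only [harmonic_succ, Rat.cast_add, Rat.cast_inv, Rat.cast_natCast]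
  have : (0:ℝ) ≤ (((n:ℝ)+1))⁻¹ := by positivity
  push_cast
  linarith

/-- Logarithmic upper bound on the average version age of a single node in a
disconnected gossip network with contact-mobility scaling `f(n) = n`. -/
theorem stmt_1 (n : ℕ) (hn : 2 ≤ n) (lam lamE : ℝ) (hlam : 0 < lam) (hlamE : 0 < lamE)
    (v : ℕ → ℝ)
    (hv : ∀ j : ℕ, 1 ≤ j → j ≤ n →
      v j = (lamE + (j : ℝ) * ((n : ℝ) - j) * (lam / n) * v (j + 1)) /
        ((j : ℝ) * lam / n + (j : ℝ) * lam / n + (j : ℝ) * ((n : ℝ) - j) * lam / n)) :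
    v 1 ≤ (lamE / lam) * (Real.log n + 1) := by
  set H : ℕ → ℝ := fun m => ((harmonic m : ℚ) : ℝ) with hH
  have hN : (0:ℝ) < n := by positivity
  have main : ∀ d j : ℕ, 1 ≤ j → j + d = n →
      v j ≤ (lamE / lam) * n * (H n - H (j - 1)) / ((n:ℝ) - j + 2) := by
    intro d
    induction d with
    | zero =>
      intro j hj1 hjn
      have hjeq : j = n := by omega
      subst hjeq
      obtain ⟨i, rfl⟩ : ∃ i, j = i + 1 := ⟨j - 1, by omega⟩
      have hpos : (0:ℝ) < (i:ℝ) + 1 := by positivity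
      have hHs : H (i+1) - H i = 1/((i:ℝ)+1) := by
        simp only [hH, harmonic_succ]
        push_cast
        ring
      simp only [Nat.add_sub_cancel]
      rw [hv (i+1) (by omega) le_rfl]
      push_cast
      simp only [sub_self, mul_zero, zero_mul, add_zero]
      apply le_of_eq
      rw [show H (i+1) - H i = 1/((i:ℝ)+1) from hHs]
      have h1 : ((i:ℝ)+1) ≠ 0 := ne_of_gt hpos
      have h2 : lam ≠ 0 := ne_of_gt hlam
      field_simp
      ring
    | succ d ih =>
      intro j hj1 hjd
      obtain ⟨i, rfl⟩ : ∃ i, j = i + 1 := ⟨j - 1, by omega⟩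
      have hJ0 : (0:ℝ) < (i:ℝ) + 1 := by positivity
      have hJN : ((i:ℝ)+1) + 1 ≤ (n:ℝ) := by
        have : ((i:ℕ) + 2 : ℕ) ≤ n := by omega
        exact_mod_cast this
      have hlamne : lam ≠ 0 := ne_of_gt hlam
      have hNne : (n:ℝ) ≠ 0 := ne_of_gt hN
      have h1 : (0:ℝ) < (n:ℝ) - ((i:ℝ)+1) + 1 := by linarith
      have h2 : (0:ℝ) < (n:ℝ) - ((i:ℝ)+1) + 2 := by linarith
      have hP : 0 ≤ H n - H (i+1) :=
        sub_nonneg.mpr (harm_mono' (show i+1 ≤ n by omega))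
      have hHi : H i = H (i+1) - 1/((i:ℝ)+1) := by
        simp only [hH, harmonic_succ]
        push_cast
        ring
      -- rewrite the recursion for j = i+1
      have hvj := hv (i+1) (by omega) (by omega)
      push_cast at hvj
      have hden : (((i:ℝ)+1) * lam / n + ((i:ℝ)+1) * lam / n
            + ((i:ℝ)+1) * ((n:ℝ) - ((i:ℝ)+1)) * lam / n)
          = ((i:ℝ)+1) * lam * ((n:ℝ) - ((i:ℝ)+1) + 2) / n := by ring
      rw [hden] at hvj
      have hdpos : 0 < ((i:ℝ)+1) * lam * ((n:ℝ) - ((i:ℝ)+1) + 2) / n := by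
        apply div_pos _ hN
        positivity
      simp only [Nat.add_sub_cancel]
      push_cast
      rw [hvj, div_le_iff₀ hdpos]
      -- bound v (i+2) by the induction hypothesis
      have hIH : v (i+1+1) ≤ (lamE / lam) * n * (H n - H (i+1)) / ((n:ℝ) - ((i:ℝ)+1) + 1) := by
        have h := ih (i + 2) (by omega) (by omega)
        have : ((n:ℝ) - (↑(i+2):ℝ) + 2) = ((n:ℝ) - ((i:ℝ)+1) + 1) := by push_cast; ring
        rw [this] at h
        exact h
      have hcoef : 0 ≤ ((i:ℝ)+1) * ((n:ℝ) - ((i:ℝ)+1)) * (lam / n) := by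
        have : (0:ℝ) ≤ (n:ℝ) - ((i:ℝ)+1) := by linarith
        positivity
      have hbase : 0 ≤ lamE * ((i:ℝ)+1) * (H n - H (i+1)) := by positivity
      have hfrac : ((n:ℝ) - ((i:ℝ)+1)) / ((n:ℝ) - ((i:ℝ)+1) + 1) ≤ 1 := by
        rw [div_le_one h1]; linarith
      calc lamE + ((i:ℝ)+1) * ((n:ℝ) - ((i:ℝ)+1)) * (lam / n) * v (i+1+1)
          ≤ lamE + ((i:ℝ)+1) * ((n:ℝ) - ((i:ℝ)+1)) * (lam / n)
              * ((lamE / lam) * n * (H n - H (i+1)) / ((n:ℝ) - ((i:ℝ)+1) + 1)) := by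
            have := mul_le_mul_of_nonneg_left hIH hcoef
            linarith
        _ = lamE + lamE * ((i:ℝ)+1) * (H n - H (i+1))
              * (((n:ℝ) - ((i:ℝ)+1)) / ((n:ℝ) - ((i:ℝ)+1) + 1)) := by
            field_simp
        _ ≤ lamE + lamE * ((i:ℝ)+1) * (H n - H (i+1)) := by
            have := mul_le_of_le_one_right hbase hfrac
            linarith
        _ = (lamE / lam) * ↑n * (H n - H i) / ((n:ℝ) - ((i:ℝ)+1) + 2)
              * (((i:ℝ)+1) * lam * ((n:ℝ) - ((i:ℝ)+1) + 2) / ↑n) := by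
            rw [hHi]
            field_simp
            ring
  -- conclude
  have h1 := main (n - 1) 1 le_rfl (by omega)
  have hH0 : H 0 = 0 := by simp [hH]
  have hHn0 : 0 ≤ H n := by
    have := harmonic_pos (show n ≠ 0 by omega)
    simp only [hH]
    exact_mod_cast this.le
  have hHn : H n ≤ Real.log n + 1 := by
    have := harmonic_le_one_add_log n
    simp only [hH]
    linarith
  simp only [Nat.sub_self, hH0, Nat.cast_one, sub_zero] at h1
  have hfrac : (n:ℝ) / ((n:ℝ) - 1 + 2) ≤ 1 := by
    rw [div_le_one (by linarith)]; linarith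
  have heq : (lamE / lam) * n * (H n) / ((n:ℝ) - 1 + 2)
      = ((lamE / lam) * H n) * ((n:ℝ) / ((n:ℝ) - 1 + 2)) := by ring
  have hbase : 0 ≤ (lamE / lam) * H n := by positivity
  calc v 1 ≤ (lamE / lam) * n * (H n) / ((n:ℝ) - 1 + 2) := h1
    _ = ((lamE / lam) * H n) * ((n:ℝ) / ((n:ℝ) - 1 + 2)) := heq
    _ ≤ (lamE / lam) * H n := mul_le_of_le_one_right hbase hfrac
    _ ≤ (lamE / lam) * (Real.log n + 1) := by
        apply mul_le_mul_of_nonneg_left hHn (by positivity)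
end

section
/- Let n ≥ 2 be a natural number and let λ > 0, λ_e > 0 be real numbers. Let v : ℕ → ℝ satisfy, for every j with 1 ≤ j ≤ n, the recursion v(j) = (λ_e + j(n−j)·(λ/(n−1) + λ/n)·v(j+1)) / (2j·λ/n + j(n−j)·(λ/(n−1) + λ/n)). Then v(1) ≤ (λ_e/λ)·(2(n−1)·H_{n−1})/(2n−1) + λ_e/(2λ), where H_m = ∑_{k=1}^{m} 1/k denotes the m-th harmonic number. -/
/-!
Write `a j = j (n - j) (λ/(n-1) + λ/n)` for the coefficient of `v (j + 1)`. Downward from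
`v n = λₑ/(2λ)` every `v j` is nonnegative, and since the denominator of the recursion is at least
`a j`, this gives `v j ≤ λₑ / a j + v (j + 1)`. Telescoping bounds `v 1` by
`λₑ/(2λ) + ∑_{j<n} λₑ / a j`, and the partial fractions `1/(j (n-j)) = (1/j + 1/(n-j)) / n`
turn this sum into a multiple of the harmonic number `H_{n-1}`.
-/

open Finset

lemma add_mul_div_add_le_div_add {E a b w : ℝ} (hE : 0 ≤ E) (ha : 0 < a) (hb : 0 ≤ b)
    (hw : 0 ≤ w) : (E + a * w) / (b + a) ≤ E / a + w := by
  rw [div_le_iff₀ (by positivity)]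
  calc E + a * w ≤ E + a * w + b * (E / a + w) := le_add_of_nonneg_right (by positivity)
    _ = (E / a + w) * (b + a) := by field_simp; ring

lemma le_add_sum_Ico_of_recursion {E : ℝ} {a b v : ℕ → ℝ} {p q : ℕ} (hpq : p ≤ q)
    (hE : 0 ≤ E) (ha : ∀ j ∈ Ico p q, 0 < a j) (hb : ∀ j ∈ Ico p q, 0 ≤ b j) (hq : 0 ≤ v q)
    (hv : ∀ j ∈ Ico p q, v j = (E + a j * v (j + 1)) / (b j + a j)) :
    v p ≤ v q + ∑ j ∈ Ico p q, E / a j := by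
  suffices h : ∀ k ≤ q, p ≤ k → 0 ≤ v k ∧ v k ≤ v q + ∑ j ∈ Ico k q, E / a j from
    (h p hpq le_rfl).2
  intro k hkq
  induction hkq using Nat.decreasingInduction with
  | self => exact fun _ => by simpa using hq
  | of_succ k hk ih =>
    intro hpk
    have hj : k ∈ Ico p q := mem_Ico.2 ⟨hpk, hk⟩
    obtain ⟨hw, hbound⟩ := ih (by omega)
    have hak := ha k hj
    have hbk := hb k hj
    refine ⟨hv k hj ▸ by positivity, ?_⟩
    calc v k ≤ E / a k + v (k + 1) := hv k hj ▸ add_mul_div_add_le_div_add hE hak hbk hw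
      _ ≤ E / a k + (v q + ∑ j ∈ Ico (k + 1) q, E / a j) := by gcongr
      _ = v q + ∑ j ∈ Ico k q, E / a j := by rw [sum_eq_sum_Ico_succ_bot hk]; ring

lemma sum_Ico_one_div_mul_sub (n : ℕ) :
    ∑ k ∈ Ico 1 n, 1 / ((k : ℝ) * (n - k)) = 2 / n * ∑ k ∈ Ico 1 n, (1 : ℝ) / k := by
  have hsplit : ∀ k ∈ Ico 1 n, 1 / ((k : ℝ) * (n - k)) = (1 / k + 1 / ((n - k : ℕ) : ℝ)) / n := by
    intro k hk
    obtain ⟨hk1, hkn⟩ := mem_Ico.1 hk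
    have hk0 : (k : ℝ) ≠ 0 := by positivity
    have hn0 : (n : ℝ) ≠ 0 := Nat.cast_ne_zero.2 (by omega)
    have hnk : (n : ℝ) - k ≠ 0 := sub_ne_zero.2 (by exact_mod_cast hkn.ne')
    rw [Nat.cast_sub hkn.le]
    field_simp
    ring
  have hreflect : ∑ k ∈ Ico 1 n, 1 / ((n - k : ℕ) : ℝ) = ∑ k ∈ Ico 1 n, (1 : ℝ) / k := by
    rcases Nat.eq_zero_or_pos n with rfl | hn
    · simp
    · rw [sum_Ico_reflect (fun k => 1 / (k : ℝ)) 1 (by omega)]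
      congr 1
      ext; simp
  rw [sum_congr rfl hsplit, ← sum_div, sum_add_distrib, hreflect]
  ring

/-- Upper bound on the average version age of a single node in a fully connected
gossip network with contact-mobility scaling `f(n) = n`. -/
theorem stmt_2 (n : ℕ) (hn : 2 ≤ n) (lam lamE : ℝ) (hlam : 0 < lam) (hlamE : 0 < lamE)
    (v : ℕ → ℝ)
    (hv : ∀ j : ℕ, 1 ≤ j → j ≤ n →
      v j = (lamE + (j : ℝ) * ((n : ℝ) - j) * (lam / ((n : ℝ) - 1) + lam / n) * v (j + 1)) /
        (2 * (j : ℝ) * lam / n + (j : ℝ) * ((n : ℝ) - j) * (lam / ((n : ℝ) - 1) + lam / n))) :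
    v 1 ≤ (lamE / lam) * (2 * ((n : ℝ) - 1) * (∑ k ∈ Finset.Icc 1 (n - 1), (1 : ℝ) / k))
        / (2 * (n : ℝ) - 1) + lamE / (2 * lam) := by
  have hn1 : (0 : ℝ) < n - 1 := sub_pos.2 (by exact_mod_cast hn)
  have hn0 : (0 : ℝ) < n := by linarith
  set c : ℝ := lam / ((n : ℝ) - 1) + lam / n with hc
  have hc_pos : 0 < c := add_pos (div_pos hlam hn1) (div_pos hlam hn0)
  have hvn : v n = lamE / (2 * lam) := by
    rw [hv n (by omega) le_rfl]
    simp only [sub_self, mul_zero, zero_mul, add_zero]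
    field_simp
  have hbound : v 1 ≤ v n + ∑ j ∈ Ico 1 n, lamE / (j * (n - j) * c) := by
    refine le_add_sum_Ico_of_recursion (b := fun j => 2 * j * lam / n) (by omega) hlamE.le
      (fun j hj => ?_) (fun j _ => by positivity) (hvn ▸ by positivity)
      (fun j hj => hv j (mem_Ico.1 hj).1 (mem_Ico.1 hj).2.le)
    have hjn : (j : ℝ) < n := by exact_mod_cast (mem_Ico.1 hj).2
    have hj : (0 : ℝ) < j := by exact_mod_cast (mem_Ico.1 hj).1
    have : (0 : ℝ) < n - j := by linarith
    positivity
  calc v 1 ≤ v n + ∑ j ∈ Ico 1 n, lamE / (j * (n - j) * c) := hbound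
    _ = lamE / (2 * lam) + lamE / c * ∑ j ∈ Ico 1 n, 1 / ((j : ℝ) * (n - j)) := by
      rw [hvn, mul_sum]
      congr 1
      exact sum_congr rfl fun j _ => by rw [div_mul_eq_div_div_swap, div_eq_mul_one_div]
    _ = _ := by
      have h2n1 : (0 : ℝ) < 2 * n - 1 := by linarith
      rw [sum_Ico_one_div_mul_sub, Icc_sub_one_right_eq_Ico_of_not_isMin (by simp; omega), hc]
      field_simp
      ring
end

section
/- Let n ≥ 2 be a natural number and let λ > 0, λ_e > 0, c > 0 be real numbers. Let v : ℕ → ℝ satisfy, for every j with 1 ≤ j ≤ n, the recursion v(j) = (λ_e + j(n−j)·(λ/(c·ln n))·v(j+1)) / (j·λ/n + j·λ/(c·ln n) + j(n−j)·λ/(c·ln n)). Then v(1) ≤ c·λ_e·(ln n)²/(λ·n) + c·λ_e·ln n/(λ·n) + c·λ_e·ln n/(n·λ·(n + c·ln n)). -/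
/-!
With `μ = λ/(c ln n)` the denominator at `j` is at least `j μ (n - j + 1)`, so
`(n - j + 1) v(j) ≤ λ_e/(μ j) + (n - j) v(j + 1)`. Telescoping from `j = n` down to `j = 1` gives
`n v(1) ≤ (λ_e/μ) (1 + 1/2 + ⋯ + 1/(n - 1)) + v(n)`; the harmonic sum is at most `1 + ln n`, and
`v(n)` is given explicitly by the case `j = n` of the recursion.
-/

open Finset Real

lemma add_one_mul_recursion_le {e μ J M w D : ℝ} (he : 0 ≤ e) (hμ : 0 < μ) (hJ : 0 < J)
    (hM : 0 ≤ M) (hw : 0 ≤ w) (hD : J * μ * (M + 1) ≤ D) :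
    (M + 1) * ((e + J * M * μ * w) / D) ≤ e / μ * J⁻¹ + M * w := by
  have hDpos : 0 < D := lt_of_lt_of_le (by positivity) hD
  rw [mul_div_assoc', div_le_iff₀ hDpos]
  calc (M + 1) * (e + J * M * μ * w) = (e / μ * J⁻¹ + M * w) * (J * μ * (M + 1)) := by
        field_simp
    _ ≤ (e / μ * J⁻¹ + M * w) * D := by gcongr

section AgeRecursion

variable {n : ℕ} {e μ : ℝ} {v D : ℕ → ℝ}

theorem recursion_nonneg_and_mul_le (he : 0 ≤ e) (hμ : 0 < μ)
    (hD : ∀ j : ℕ, 1 ≤ j → j ≤ n → j * μ * (n - j + 1) ≤ D j)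
    (hv : ∀ j : ℕ, 1 ≤ j → j ≤ n → v j = (e + j * (n - j) * μ * v (j + 1)) / D j)
    {j : ℕ} (hj : 1 ≤ j) (hjn : j ≤ n) :
    0 ≤ v j ∧ (n - j + 1) * v j ≤ e / μ * ∑ i ∈ Ico j n, (i : ℝ)⁻¹ + v n := by
  have hDpos (k : ℕ) (hk : 1 ≤ k) (hkn : k ≤ n) : 0 < D k := by
    have hk0 : (0 : ℝ) < k := by exact_mod_cast hk
    have hkn' : (k : ℝ) ≤ n := by exact_mod_cast hkn
    refine lt_of_lt_of_le ?_ (hD k hk hkn)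
    have : (0 : ℝ) < n - k + 1 := by linarith
    positivity
  refine Nat.decreasingInduction' (P := fun j ↦
    0 ≤ v j ∧ (n - j + 1) * v j ≤ e / μ * ∑ i ∈ Ico j n, (i : ℝ)⁻¹ + v n) ?_ hjn ?_
  · intro k hkn hjk ⟨hw, hbound⟩
    have hk : 1 ≤ k := hj.trans hjk
    have hM : (0 : ℝ) ≤ n - k := by
      rw [sub_nonneg]; exact_mod_cast hkn.le
    rw [hv k hk hkn.le, sum_eq_sum_Ico_succ_bot hkn]
    refine ⟨div_nonneg (by positivity) (hDpos k hk hkn.le).le, ?_⟩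
    have hstep := add_one_mul_recursion_le he hμ (by positivity) hM hw (hD k hk hkn.le)
    push_cast at hbound
    linarith
  · have hvn : 0 ≤ v n := by
      rw [hv n (hj.trans hjn) le_rfl, sub_self, mul_zero, zero_mul, zero_mul, add_zero]
      exact div_nonneg he (hDpos n (hj.trans hjn) le_rfl).le
    simpa using hvn

end AgeRecursion

lemma sum_Ico_one_inv_le_one_add_log (n : ℕ) :
    ∑ i ∈ Ico 1 n, (i : ℝ)⁻¹ ≤ 1 + log n :=
  calc ∑ i ∈ Ico 1 n, (i : ℝ)⁻¹ ≤ ∑ i ∈ Icc 1 n, (i : ℝ)⁻¹ :=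
        sum_le_sum_of_subset_of_nonneg Ico_subset_Icc_self fun _ _ _ ↦ by positivity
    _ = harmonic n := by simp [harmonic_eq_sum_Icc]
    _ ≤ 1 + log n := harmonic_le_one_add_log n

/-- Upper bound on the average version age of a single node in a disconnected
gossip network with contact-mobility scaling `f(n) = c·ln n`. -/
theorem stmt_3 (n : ℕ) (hn : 2 ≤ n) (lam lamE c : ℝ) (hlam : 0 < lam) (hlamE : 0 < lamE)
    (hc : 0 < c) (v : ℕ → ℝ)
    (hv : ∀ j : ℕ, 1 ≤ j → j ≤ n →
      v j = (lamE + (j : ℝ) * ((n : ℝ) - j) * (lam / (c * Real.log n)) * v (j + 1)) /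
        ((j : ℝ) * lam / n + (j : ℝ) * lam / (c * Real.log n)
          + (j : ℝ) * ((n : ℝ) - j) * lam / (c * Real.log n))) :
    v 1 ≤ c * lamE * (Real.log n) ^ 2 / (lam * n)
        + c * lamE * Real.log n / (lam * n)
        + c * lamE * Real.log n / ((n : ℝ) * lam * ((n : ℝ) + c * Real.log n)) := by
  have hn0 : (0 : ℝ) < n := by positivity
  have hL : 0 < log n := log_pos (by exact_mod_cast hn)
  have hD (j : ℕ) (_ : 1 ≤ j) (_ : j ≤ n) : j * (lam / (c * log n)) * (n - j + 1) ≤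
      j * lam / n + j * lam / (c * log n) + j * (n - j) * lam / (c * log n) := by
    have : (0 : ℝ) ≤ j * lam / n := by positivity
    linarith [show j * lam / n + j * lam / (c * log n) + j * (n - j) * lam / (c * log n)
      = j * lam / n + j * (lam / (c * log n)) * (n - j + 1) by ring]
  have hbound := (recursion_nonneg_and_mul_le hlamE.le (by positivity) hD hv le_rfl
    (by omega)).2
  have hvn : v n = c * lamE * log n / (lam * (n + c * log n)) := by
    rw [hv n (by omega) le_rfl]
    field_simp
    ring
  have hsum := sum_Ico_one_inv_le_one_add_log n
  rw [Nat.cast_one, sub_add_cancel] at hbound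
  rw [← mul_le_mul_iff_right₀ hn0]
  calc n * v 1 ≤ lamE / (lam / (c * log n)) * (1 + log n) + v n := by
        have := mul_le_mul_of_nonneg_left hsum (by positivity : 0 ≤ lamE / (lam / (c * log n)))
        linarith
    _ = _ := by rw [hvn]; field_simp; ring
end

section
/- Let n ≥ 2 be a natural number and let λ > 0, λ_e > 0, c > 0 be real numbers. Let v : ℕ → ℝ satisfy, for every j with 1 ≤ j ≤ n, the recursion v(j) = (λ_e + j(n−j)·(λ/(n−1) + λ/(c·ln n))·v(j+1)) / (j·λ/n + j·λ/(c·ln n) + j(n−j)·(λ/(n−1) + λ/(c·ln n))). Then v(1) ≤ 2·c·λ_e·(ln n + 1)·ln n/(λ·(n−1)) + c·λ_e·ln n/(λ·(c·ln n + n)). -/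
/-!
The recursion reads `v j = (λ_e + A_j v (j + 1)) / (B_j + A_j)` with `A_j = j (n - j) a` the
gossip-plus-mobility rate. Since every `v j` is nonnegative, dropping `B_j` gives
`v j ≤ λ_e / A_j + v (j + 1)`, and telescoping down from the exactly computed `v n` bounds `v 1`
by `λ_e / a · ∑_{0<i<n} 1 / (i (n - i)) + v n`. Partial fractions turn that sum into
`2 H_{n-1} / n ≤ 2 (ln n + 1) / (n - 1)`, and `a ≥ λ / (c ln n)`.
-/

open Finset

lemma le_sum_Ico_add_of_le_add {u d : ℕ → ℝ} {a b : ℕ} (hab : a ≤ b)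
    (h : ∀ i, a ≤ i → i < b → u i ≤ d i + u (i + 1)) :
    u a ≤ ∑ i ∈ Ico a b, d i + u b := by
  induction b, hab using Nat.le_induction with
  | base => simp
  | succ b hab ih =>
    rw [sum_Ico_succ_top hab]
    linarith [ih fun i hai hib => h i hai (by omega), h b hab (by omega)]

lemma div_add_le_div_add {e A B x : ℝ} (hA : 0 < A) (hB : 0 ≤ B) (hnum : 0 ≤ e + A * x) :
    (e + A * x) / (B + A) ≤ e / A + x := calc
  (e + A * x) / (B + A) ≤ (e + A * x) / A := div_le_div_of_nonneg_left hnum hA (by linarith)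
  _ = e / A + x := by field_simp

lemma sum_Ico_inv_mul_sub (n : ℕ) :
    ∑ i ∈ Ico 1 n, ((i : ℝ) * (n - i))⁻¹ = 2 * (harmonic (n - 1) / n) := by
  rcases Nat.eq_zero_or_pos n with rfl | hn
  · simp
  have hpartial : ∀ i ∈ Ico 1 n,
      ((i : ℝ) * (n - i))⁻¹ = ((i : ℝ)⁻¹ + ((n - i : ℕ) : ℝ)⁻¹) / n := by
    intro i hi
    rw [mem_Ico] at hi
    have hi0 : (i : ℝ) ≠ 0 := Nat.cast_ne_zero.mpr (by omega)
    have hni : (n : ℝ) - i ≠ 0 := sub_ne_zero.mpr (by exact_mod_cast hi.2.ne')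
    rw [Nat.cast_sub hi.2.le]
    field_simp
    ring
  have hreflect : ∑ i ∈ Ico 1 n, ((n - i : ℕ) : ℝ)⁻¹ = ∑ i ∈ Ico 1 n, (i : ℝ)⁻¹ := by
    rw [sum_Ico_reflect (fun i => (i : ℝ)⁻¹) 1 (Nat.le_succ n), Nat.add_sub_cancel_left,
      Nat.add_sub_cancel]
  have hharmonic : ∑ i ∈ Ico 1 n, (i : ℝ)⁻¹ = harmonic (n - 1) := by
    rw [harmonic_eq_sum_Icc, ← Ico_add_one_right_eq_Icc, Nat.sub_one_add_one hn.ne']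
    push_cast
    rfl
  rw [sum_congr rfl hpartial, ← sum_div, sum_add_distrib, hreflect, hharmonic]
  ring

lemma harmonic_pred_div_le {n : ℕ} (hn : 2 ≤ n) :
    (harmonic (n - 1) : ℝ) / n ≤ (Real.log n + 1) / (n - 1) := by
  have hn1 : (1 : ℝ) < n := by exact_mod_cast hn
  have hlog : Real.log ((n - 1 : ℕ) : ℝ) ≤ Real.log n :=
    Real.log_le_log (by exact_mod_cast (by omega : 0 < n - 1)) (by exact_mod_cast n.sub_le 1)
  have := harmonic_le_one_add_log (n - 1)
  gcongr <;> linarith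

section AgeRecursion

variable {n : ℕ} {e a b : ℝ} {v : ℕ → ℝ}
  (hv : ∀ j : ℕ, 1 ≤ j → j ≤ n →
    v j = (e + j * (n - j) * a * v (j + 1)) / (j * b + j * (n - j) * a))
include hv

lemma ageRecursion_top (hn : 1 ≤ n) : v n = e / (n * b) := by
  simpa using hv n hn le_rfl

lemma ageRecursion_nonneg (he : 0 ≤ e) (ha : 0 ≤ a) (hb : 0 ≤ b) {j : ℕ} (hj : 1 ≤ j)
    (hjn : j ≤ n) : 0 ≤ v j := by
  refine Nat.decreasingInduction' (P := fun k => 0 ≤ v k) (fun k hk hjk ih => ?_) hjn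
    (by rw [ageRecursion_top hv (hj.trans hjn)]; positivity)
  have hnk : (0 : ℝ) ≤ n - k := sub_nonneg.mpr (by exact_mod_cast hk.le)
  rw [hv k (hj.trans hjk) hk.le]
  positivity

lemma ageRecursion_le_succ (he : 0 ≤ e) (ha : 0 < a) (hb : 0 ≤ b) {j : ℕ} (hj : 1 ≤ j)
    (hjn : j < n) : v j ≤ e / (j * (n - j) * a) + v (j + 1) := by
  have hnj : (0 : ℝ) < n - j := sub_pos.mpr (by exact_mod_cast hjn)
  have hA : (0 : ℝ) < j * (n - j) * a := by positivity
  rw [hv j hj hjn.le]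
  refine div_add_le_div_add hA (by positivity) ?_
  have := ageRecursion_nonneg hv he ha.le hb (j := j + 1) (by omega) hjn
  positivity

lemma ageRecursion_le (he : 0 ≤ e) (ha : 0 < a) (hb : 0 ≤ b) (hn : 1 ≤ n) :
    v 1 ≤ e / a * (2 * (harmonic (n - 1) / n)) + e / (n * b) := by
  rw [← ageRecursion_top hv hn, ← sum_Ico_inv_mul_sub, mul_sum]
  refine le_sum_Ico_add_of_le_add hn fun i hi hin => ?_
  convert ageRecursion_le_succ hv he ha hb hi hin using 2
  simp only [div_eq_mul_inv, mul_inv]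
  ring

end AgeRecursion

/-- Upper bound on the average version age of a single node in a fully connected
gossip network with contact-mobility scaling `f(n) = c·ln n`. -/
theorem stmt_4 (n : ℕ) (hn : 2 ≤ n) (lam lamE c : ℝ) (hlam : 0 < lam) (hlamE : 0 < lamE)
    (hc : 0 < c) (v : ℕ → ℝ)
    (hv : ∀ j : ℕ, 1 ≤ j → j ≤ n →
      v j = (lamE + (j : ℝ) * ((n : ℝ) - j) * (lam / ((n : ℝ) - 1) + lam / (c * Real.log n))
              * v (j + 1)) /
        ((j : ℝ) * lam / n + (j : ℝ) * lam / (c * Real.log n)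
          + (j : ℝ) * ((n : ℝ) - j) * (lam / ((n : ℝ) - 1) + lam / (c * Real.log n)))) :
    v 1 ≤ 2 * c * lamE * (Real.log n + 1) * Real.log n / (lam * ((n : ℝ) - 1))
        + c * lamE * Real.log n / (lam * (c * Real.log n + n)) := by
  set L := Real.log n
  have hL : 0 < L := Real.log_pos (by exact_mod_cast hn)
  have hn1 : (0 : ℝ) < n - 1 := sub_pos.mpr (by exact_mod_cast hn)
  have hv' : ∀ j : ℕ, 1 ≤ j → j ≤ n →
      v j = (lamE + j * (n - j) * (lam / (n - 1) + lam / (c * L)) * v (j + 1)) /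
        (j * (lam / n + lam / (c * L)) + j * (n - j) * (lam / (n - 1) + lam / (c * L))) :=
    fun j hj hjn => by rw [hv j hj hjn]; ring_nf
  calc v 1 ≤ lamE / (lam / (n - 1) + lam / (c * L)) * (2 * (harmonic (n - 1) / n))
        + lamE / (n * (lam / n + lam / (c * L))) :=
        ageRecursion_le hv' hlamE.le (by positivity) (by positivity) (by omega)
    _ ≤ lamE / (lam / (c * L)) * (2 * ((L + 1) / (n - 1)))
        + lamE / (n * (lam / n + lam / (c * L))) := by
        gcongr ?_ * (2 * ?_) + _
        · have hH : (0 : ℝ) ≤ harmonic (n - 1) := mod_cast (harmonic_pos (by omega)).le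
          positivity
        · gcongr
          exact le_add_of_nonneg_left (div_pos hlam hn1).le
        · exact harmonic_pred_div_le hn
    _ = 2 * c * lamE * (L + 1) * L / (lam * (n - 1)) + c * lamE * L / (lam * (c * L + n)) := by
        field_simp [hn1.ne']
end

section
/- Let n ≥ 2 be a natural number and let λ > 0, λ_e > 0, c > 0 be real numbers. Let v : ℕ → ℝ satisfy, for every j with 1 ≤ j ≤ n, the recursion v(j) = (λ_e + j(n−j)·(λ/c)·v(j+1)) / (j·λ/n + j·λ/c + j(n−j)·λ/c). Then v(1) ≤ c·λ_e·(ln n + 1)/(n·λ) + c·λ_e/(n·λ·(c + n)). -/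
/-- Upper bound on the average version age of a single node in a disconnected
gossip network with constant contact-mobility scaling `f(n) = c`. -/
theorem stmt_5 (n : ℕ) (hn : 2 ≤ n) (lam lamE c : ℝ) (hlam : 0 < lam) (hlamE : 0 < lamE)
    (hc : 0 < c) (v : ℕ → ℝ)
    (hv : ∀ j : ℕ, 1 ≤ j → j ≤ n →
      v j = (lamE + (j : ℝ) * ((n : ℝ) - j) * (lam / c) * v (j + 1)) /
        ((j : ℝ) * lam / n + (j : ℝ) * lam / c + (j : ℝ) * ((n : ℝ) - j) * lam / c)) :
    v 1 ≤ c * lamE * (Real.log n + 1) / ((n : ℝ) * lam)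
        + c * lamE / ((n : ℝ) * lam * (c + n)) := by
  have hn0 : (2 : ℝ) ≤ n := by exact_mod_cast hn
  have hN : (0 : ℝ) < n := by linarith
  -- denominator positivity
  have hD : ∀ j : ℕ, 1 ≤ j → j ≤ n →
      0 < (j : ℝ) * lam / n + (j : ℝ) * lam / c + (j : ℝ) * ((n : ℝ) - j) * lam / c := by
    intro j h1 h2
    have hJ : (1 : ℝ) ≤ j := by exact_mod_cast h1
    have hJN : (j : ℝ) ≤ n := by exact_mod_cast h2
    have t1 : 0 < (j : ℝ) * lam / n := div_pos (mul_pos (by linarith) hlam) hN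
    have t2 : 0 < (j : ℝ) * lam / c := div_pos (mul_pos (by linarith) hlam) hc
    have t3 : 0 ≤ (j : ℝ) * ((n : ℝ) - j) * lam / c := by
      apply div_nonneg _ hc.le
      have : 0 ≤ (j : ℝ) * ((n : ℝ) - j) := mul_nonneg (by linarith) (by linarith)
      nlinarith
    linarith
  -- nonnegativity of v j for 1 ≤ j ≤ n, by downward induction
  have hvnn : ∀ d j : ℕ, j + d = n → 1 ≤ j → 0 ≤ v j := by
    intro d
    induction d with
    | zero =>
      intro j hjd h1
      have hjn : j = n := by omega
      subst hjn
      rw [hv j h1 le_rfl]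
      have hz : ((j : ℝ) - (j : ℝ)) = 0 := sub_self _
      rw [hz]
      apply div_nonneg
      · simp; positivity
      · have := hD j h1 le_rfl
        rw [hz] at this
        linarith
    | succ d ih =>
      intro j hjd h1
      have h2 : j ≤ n := by omega
      have hv' : 0 ≤ v (j + 1) := ih (j + 1) (by omega) (by omega)
      rw [hv j h1 h2]
      apply div_nonneg _ (hD j h1 h2).le
      have hJ : (1 : ℝ) ≤ j := by exact_mod_cast h1
      have hJN : (j : ℝ) ≤ n := by exact_mod_cast h2
      have : 0 ≤ (j : ℝ) * ((n : ℝ) - j) * (lam / c) * v (j + 1) := by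
        apply mul_nonneg _ hv'
        apply mul_nonneg (mul_nonneg (by linarith) (by linarith)) (by positivity)
      linarith
  -- key downward induction
  have key : ∀ d j : ℕ, j + d = n → 1 ≤ j →
      ((n : ℝ) - j + 1) * v j ≤ c * lamE / lam * (∑ k ∈ Finset.Ico j n, (1 : ℝ) / k)
        + c * lamE / (lam * (c + n)) := by
    intro d
    induction d with
    | zero =>
      intro j hjd h1
      have hjn : j = n := by omega
      subst hjn
      rw [hv j h1 le_rfl, Finset.Ico_self, Finset.sum_empty]
      have hz : ((j : ℝ) - (j : ℝ)) = 0 := sub_self _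
      rw [hz]
      have hcn : (0 : ℝ) < c + (j : ℝ) := by linarith
      have hj0 : (j : ℝ) ≠ 0 := ne_of_gt hN
      have heq : ((0 : ℝ) + 1) * ((lamE + (j : ℝ) * 0 * (lam / c) * v (j + 1)) /
          ((j : ℝ) * lam / j + (j : ℝ) * lam / c + (j : ℝ) * 0 * lam / c))
          = c * lamE / lam * 0 + c * lamE / (lam * (c + j)) := by
        field_simp
        ring
      rw [heq]
    | succ d ih =>
      intro j hjd h1
      have h2 : j ≤ n := by omega
      have hjlt : j < n := by omega
      have hJ : (1 : ℝ) ≤ j := by exact_mod_cast h1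
      have hJN : (j : ℝ) + 1 ≤ n := by exact_mod_cast (show j + 1 ≤ n by omega)
      have hv' : 0 ≤ v (j + 1) := hvnn d (j + 1) (by omega) (by omega)
      have hDj := hD j h1 h2
      have ih' := ih (j + 1) (by omega) (by omega)
      rw [Finset.sum_eq_sum_Ico_succ_bot hjlt]
      push_cast at ih' ⊢
      -- step inequality
      have step : ((n : ℝ) - j + 1) * v j ≤ c * lamE / (lam * j) + ((n : ℝ) - j) * v (j + 1) := by
        rw [hv j h1 h2, mul_div_assoc']
        rw [div_le_iff₀ hDj]
        have sub1 : ((n : ℝ) - j + 1) * lamE ≤ c * lamE / (lam * j) *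
            ((j : ℝ) * lam / n + (j : ℝ) * lam / c + (j : ℝ) * ((n : ℝ) - j) * lam / c) := by
          have heq : c * lamE / (lam * j) *
              ((j : ℝ) * lam / n + (j : ℝ) * lam / c + (j : ℝ) * ((n : ℝ) - j) * lam / c)
              = lamE * (c / n + 1 + ((n : ℝ) - j)) := by
            field_simp
          rw [heq]
          have : 0 < c / n := div_pos hc hN
          nlinarith
        have sub2 : ((n : ℝ) - j + 1) * ((j : ℝ) * ((n : ℝ) - j) * (lam / c)) ≤
            ((n : ℝ) - j) *
            ((j : ℝ) * lam / n + (j : ℝ) * lam / c + (j : ℝ) * ((n : ℝ) - j) * lam / c) := by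
          have heq : ((n : ℝ) - j) *
              ((j : ℝ) * lam / n + (j : ℝ) * lam / c + (j : ℝ) * ((n : ℝ) - j) * lam / c)
              - ((n : ℝ) - j + 1) * ((j : ℝ) * ((n : ℝ) - j) * (lam / c))
              = ((n : ℝ) - j) * (j : ℝ) * lam / n := by
            field_simp
            ring
          have hnn : 0 ≤ ((n : ℝ) - j) * (j : ℝ) * lam / n := by
            apply div_nonneg _ hN.le
            apply mul_nonneg (mul_nonneg (by linarith) (by linarith)) hlam.le
          linarith
        have sub2' := mul_le_mul_of_nonneg_right sub2 hv'
        nlinarith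
      have hco : c * lamE / lam * (1 / (j : ℝ)) = c * lamE / (lam * j) := by
        field_simp
      have tail : ((n : ℝ) - j) * v (j + 1) ≤
          c * lamE / lam * (∑ k ∈ Finset.Ico (j + 1) n, (1 : ℝ) / k)
            + c * lamE / (lam * (c + n)) := by
        have : (n : ℝ) - ((j : ℝ) + 1) + 1 = (n : ℝ) - j := by ring
        rw [this] at ih'
        exact ih'
      calc ((n : ℝ) - j + 1) * v j ≤ c * lamE / (lam * j) + ((n : ℝ) - j) * v (j + 1) := step
        _ ≤ c * lamE / (lam * j) + (c * lamE / lam * (∑ k ∈ Finset.Ico (j + 1) n, (1 : ℝ) / k)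
              + c * lamE / (lam * (c + n))) := by linarith
        _ = c * lamE / lam * (1 / (j : ℝ) + ∑ k ∈ Finset.Ico (j + 1) n, (1 : ℝ) / k)
              + c * lamE / (lam * (c + n)) := by linear_combination -hco
  -- apply at j = 1
  have hkey1 := key (n - 1) 1 (by omega) le_rfl
  push_cast at hkey1
  have hone : (n : ℝ) - 1 + 1 = n := by ring
  rw [hone] at hkey1
  -- harmonic bound
  have hharm : (∑ k ∈ Finset.Ico 1 n, (1 : ℝ) / k) ≤ Real.log n + 1 := by
    have h1 : (∑ k ∈ Finset.Ico 1 n, (1 : ℝ) / k) = (harmonic (n - 1) : ℝ) := by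
      rw [harmonic_eq_sum_Icc]
      push_cast
      rw [show n = (n - 1) + 1 by omega, Finset.Ico_add_one_right_eq_Icc]
      simp [one_div]
    rw [h1]
    have h2 := harmonic_le_one_add_log (n - 1)
    have h3 : Real.log ((n : ℝ) - 1) ≤ Real.log n := by
      apply Real.log_le_log (by linarith) (by linarith)
    have h4 : ((n - 1 : ℕ) : ℝ) = (n : ℝ) - 1 := by
      push_cast [Nat.cast_sub (by omega : 1 ≤ n)]
      ring
    rw [h4] at h2
    linarith
  have hcoef : (0 : ℝ) ≤ c * lamE / lam := by positivity
  have hmain : (n : ℝ) * v 1 ≤ c * lamE / lam * (Real.log n + 1) + c * lamE / (lam * (c + n)) := by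
    have := mul_le_mul_of_nonneg_left hharm hcoef
    linarith
  have hfin : v 1 ≤ (c * lamE / lam * (Real.log n + 1) + c * lamE / (lam * (c + n))) / n := by
    rw [le_div_iff₀ hN]
    linarith [hmain]
  have heq : (c * lamE / lam * (Real.log n + 1) + c * lamE / (lam * (c + n))) / n
      = c * lamE * (Real.log n + 1) / ((n : ℝ) * lam) + c * lamE / ((n : ℝ) * lam * (c + n)) := by
    have hcn : (0 : ℝ) < c + n := by linarith
    field_simp
  rw [heq] at hfin
  exact hfin
end

section
/- Let n ≥ 2 be a natural number and let λ > 0, λ_e > 0, c > 0 be real numbers. Let v : ℕ → ℝ satisfy, for every j with 1 ≤ j ≤ n, the recursion v(j) = (λ_e + j(n−j)·(λ/(n−1) + λ/c)·v(j+1)) / (j·λ/n + j·λ/c + j(n−j)·(λ/(n−1) + λ/c)). Then v(1) ≤ 2·c·λ_e·(ln n + 1)/(λ·n) + c·λ_e/(λ·(c + n)). -/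
/-!
Write the recursion as `v j = (λₑ + a v(j+1)) / (b + a)` with `a ≥ 0 < b`. Backwards from
`v n ≥ 0`, every `v j` is nonnegative and `v j ≤ λₑ / (a + b) + v (j+1)`, and dropping the
source and gossip terms from `a + b` leaves `(λ/c) j (n + 1 - j)`. Hence
`v 1 ≤ v n + (c λₑ / λ) ∑_{j<n} 1 / (j (n + 1 - j))`; the partial fractions
`1 / (j (n + 1 - j)) = (1/j + 1/(n + 1 - j)) / (n + 1)` bound the sum by `2 Hₙ / (n + 1)`,
and `Hₙ ≤ 1 + ln n`.
-/

open Finset Real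

theorem le_sum_Ico_add_of_step {α : Type*} [AddCommMonoid α] [PartialOrder α]
    [IsOrderedAddMonoid α] {v d : ℕ → α} {m n : ℕ} (hmn : m ≤ n) (hn : 0 ≤ v n)
    (hstep : ∀ j, m ≤ j → j < n → 0 ≤ v (j + 1) → 0 ≤ v j ∧ v j ≤ d j + v (j + 1)) :
    0 ≤ v m ∧ v m ≤ ∑ j ∈ Ico m n, d j + v n := by
  refine Nat.decreasingInduction' (P := fun k => 0 ≤ v k ∧ v k ≤ ∑ j ∈ Ico k n, d j + v n)
    (fun k hkn hmk ih => ?_) hmn (by simp [hn])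
  obtain ⟨hv₀, hv₁⟩ := hstep k hmk hkn ih.1
  refine ⟨hv₀, hv₁.trans ?_⟩
  rw [sum_eq_sum_Ico_succ_bot hkn, add_assoc]
  exact add_le_add le_rfl ih.2

theorem add_mul_div_add_le {e a b w : ℝ} (ha : 0 ≤ a) (hb : 0 < b) (hw : 0 ≤ w) :
    (e + a * w) / (b + a) ≤ e / (b + a) + w := by
  rw [add_div]
  gcongr
  exact div_le_of_le_mul₀ (by positivity) hw (by nlinarith)

theorem sum_range_inv_succ_mul_sub (n : ℕ) :
    ∑ k ∈ range n, (((k : ℝ) + 1) * (n - k))⁻¹ = 2 * harmonic n / (n + 1) := by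
  have hsplit : ∀ k ∈ range n, (((k : ℝ) + 1) * (n - k))⁻¹
      = ((k : ℝ) + 1)⁻¹ / (n + 1) + ((n : ℝ) - k)⁻¹ / (n + 1) := by
    intro k hk
    have hkn : (n : ℝ) - k ≠ 0 := by
      have : (k : ℝ) < n := by exact_mod_cast mem_range.mp hk
      linarith
    field_simp
    ring
  have hreflect : ∑ k ∈ range n, ((n : ℝ) - k)⁻¹ = ∑ k ∈ range n, ((k : ℝ) + 1)⁻¹ := by
    rw [← sum_range_reflect]
    refine sum_congr rfl fun k hk => ?_
    have hkn := mem_range.mp hk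
    rw [Nat.cast_sub (by omega), Nat.cast_sub (by omega)]
    push_cast
    ring_nf
  rw [sum_congr rfl hsplit, sum_add_distrib, ← sum_div, ← sum_div, hreflect, harmonic]
  push_cast
  ring

theorem sum_Ico_inv_mul_le_log (n : ℕ) :
    ∑ k ∈ Ico 1 n, ((k : ℝ) * (n + 1 - k))⁻¹ ≤ 2 * (log n + 1) / n := by
  calc ∑ k ∈ Ico 1 n, ((k : ℝ) * (n + 1 - k))⁻¹
      ≤ ∑ k ∈ Ico 1 (n + 1), ((k : ℝ) * (n + 1 - k))⁻¹ := by
        refine sum_le_sum_of_subset_of_nonneg (Ico_subset_Ico_right n.le_succ) fun k hk _ => ?_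
        have hkn : (k : ℝ) ≤ n := by exact_mod_cast Nat.lt_succ_iff.mp (mem_Ico.mp hk).2
        have : (0 : ℝ) ≤ n + 1 - k := by linarith
        positivity
    _ = ∑ k ∈ range n, (((k : ℝ) + 1) * (n - k))⁻¹ := by
        rw [sum_Ico_eq_sum_range, Nat.add_sub_cancel]
        refine sum_congr rfl fun k _ => ?_
        push_cast
        ring_nf
    _ = 2 * harmonic n / (n + 1) := sum_range_inv_succ_mul_sub n
    _ ≤ 2 * (log n + 1) / n := by
        rcases n.eq_zero_or_pos with rfl | hn
        · simp
        have hH : ((harmonic n : ℚ) : ℝ) ≤ log n + 1 := by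
          rw [add_comm]
          exact harmonic_le_one_add_log n
        gcongr
        linarith

theorem div_mul_le_recursion_denominator {j n lam : ℝ} (c : ℝ) (hj : 0 ≤ j) (hjn : j ≤ n) (hn : 1 ≤ n)
    (hlam : 0 ≤ lam) :
    lam / c * (j * (n + 1 - j))
      ≤ j * lam / n + j * lam / c + j * (n - j) * (lam / (n - 1) + lam / c) := by
  have hnj : 0 ≤ n - j := by linarith
  have hn1 : 0 ≤ n - 1 := by linarith
  have : 0 ≤ j * lam / n + j * (n - j) * (lam / (n - 1)) := by positivity
  linarith [show lam / c * (j * (n + 1 - j)) = j * lam / c + j * (n - j) * (lam / c) by ring]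

def VersionAgeRecursion (n : ℕ) (lam lamE c : ℝ) (v : ℕ → ℝ) : Prop :=
  ∀ j : ℕ, 1 ≤ j → j ≤ n →
    v j = (lamE + (j : ℝ) * ((n : ℝ) - j) * (lam / ((n : ℝ) - 1) + lam / c) * v (j + 1)) /
      ((j : ℝ) * lam / n + (j : ℝ) * lam / c
        + (j : ℝ) * ((n : ℝ) - j) * (lam / ((n : ℝ) - 1) + lam / c))

namespace VersionAgeRecursion

variable {n : ℕ} {lam lamE c : ℝ} {v : ℕ → ℝ}

theorem apply_self (hv : VersionAgeRecursion n lam lamE c v) (hn : 1 ≤ n) (hlam : 0 < lam)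
    (hc : 0 < c) : v n = c * lamE / (lam * (c + n)) := by
  have hn₀ : (0 : ℝ) < n := by exact_mod_cast hn
  rw [hv n hn le_rfl, sub_self, mul_zero, zero_mul, zero_mul, add_zero, add_zero]
  field_simp

theorem le_inv_mul_add (hv : VersionAgeRecursion n lam lamE c v) (hn : 1 ≤ n)
    (hlam : 0 < lam) (hlamE : 0 ≤ lamE) (hc : 0 < c) {j : ℕ} (hj : 1 ≤ j) (hjn : j < n)
    (hw : 0 ≤ v (j + 1)) :
    0 ≤ v j ∧ v j ≤ c * lamE / lam * ((j : ℝ) * (n + 1 - j))⁻¹ + v (j + 1) := by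
  have hj₁ : (1 : ℝ) ≤ j := by exact_mod_cast hj
  have hjn' : (j : ℝ) ≤ n := by exact_mod_cast hjn.le
  have hn₁ : (1 : ℝ) ≤ n := by exact_mod_cast hn
  have hD : 0 < (j : ℝ) * (n + 1 - j) := by nlinarith
  have ha : 0 ≤ (j : ℝ) * (n - j) * (lam / (n - 1) + lam / c) := by
    have : 0 ≤ (n : ℝ) - 1 := by linarith
    have : 0 ≤ (n : ℝ) - j := by linarith
    positivity
  have hb : 0 < (j : ℝ) * lam / n + j * lam / c := by positivity
  rw [hv j hj hjn.le]
  refine ⟨by positivity, (add_mul_div_add_le ha hb hw).trans (add_le_add ?_ le_rfl)⟩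
  calc lamE / _ ≤ lamE / (lam / c * ((j : ℝ) * (n + 1 - j))) := by
        gcongr
        exact div_mul_le_recursion_denominator c (by positivity) hjn' hn₁ hlam.le
    _ = c * lamE / lam * ((j : ℝ) * (n + 1 - j))⁻¹ := by
        field_simp

end VersionAgeRecursion

/-- Upper bound on the average version age of a single node in a fully connected
gossip network with constant contact-mobility scaling `f(n) = c`. -/
theorem stmt_6 (n : ℕ) (hn : 2 ≤ n) (lam lamE c : ℝ) (hlam : 0 < lam) (hlamE : 0 < lamE)
    (hc : 0 < c) (v : ℕ → ℝ)
    (hv : ∀ j : ℕ, 1 ≤ j → j ≤ n →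
      v j = (lamE + (j : ℝ) * ((n : ℝ) - j) * (lam / ((n : ℝ) - 1) + lam / c) * v (j + 1)) /
        ((j : ℝ) * lam / n + (j : ℝ) * lam / c
          + (j : ℝ) * ((n : ℝ) - j) * (lam / ((n : ℝ) - 1) + lam / c))) :
    v 1 ≤ 2 * c * lamE * (Real.log n + 1) / (lam * n)
        + c * lamE / (lam * (c + n)) := by
  have hrec : VersionAgeRecursion n lam lamE c v := hv
  have hn₁ : 1 ≤ n := by omega
  have hvn := hrec.apply_self hn₁ hlam hc
  obtain ⟨-, hv₁⟩ := le_sum_Ico_add_of_step hn₁ (by rw [hvn]; positivity)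
    fun j hj hjn => hrec.le_inv_mul_add hn₁ hlam hlamE.le hc hj hjn
  calc v 1 ≤ c * lamE / lam * ∑ j ∈ Ico 1 n, ((j : ℝ) * (n + 1 - j))⁻¹ + v n := by
        rwa [mul_sum]
    _ ≤ c * lamE / lam * (2 * (log n + 1) / n) + v n := by
        gcongr
        exact sum_Ico_inv_mul_le_log n
    _ = 2 * c * lamE * (Real.log n + 1) / (lam * n) + c * lamE / (lam * (c + n)) := by
        rw [hvn]
        ring
end

section
/- Let λ > 0 and λ_e > 0 be real numbers. There exists a constant C > 0 such that for every natural number n ≥ 2, if v : ℕ → ℝ satisfies, for every j with 1 ≤ j ≤ n, either the disconnected recursion v(j) = (λ_e + j(n−j)(λ/n)·v(j+1)) / (2jλ/n + j(n−j)λ/n) or the fully connected recursion v(j) = (λ_e + j(n−j)(λ/(n−1) + λ/n)·v(j+1)) / (2jλ/n + j(n−j)(λ/(n−1) + λ/n)), then v(1) ≤ C·ln n. (This is the f(n) = n case of the scaling lemma: v(1) = O(ln n) for both topologies.) -/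
/-- Harmonic sum bound: `∑_{i=1}^{m} 1/i ≤ 1 + log m`. -/
lemma stmt7_harm (m : ℕ) : ∑ i ∈ Finset.Ico 1 (m + 1), (1 : ℝ) / (i : ℝ) ≤ 1 + Real.log m := by
  have h := harmonic_le_one_add_log m
  have e : ((harmonic m : ℚ) : ℝ) = ∑ i ∈ Finset.Ico 1 (m + 1), (1 : ℝ) / (i : ℝ) := by
    rw [harmonic]
    push_cast
    rw [Finset.sum_Ico_eq_sum_range]
    simp [one_div, add_comm]
  rw [e] at h
  exact_mod_cast h

/-- Key recursion bound: under either recursion (abstracted via the coefficient `A`),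
the value `v 1` is bounded by an explicit harmonic-type sum. -/
lemma stmt7_aux (lam lamE : ℝ) (hlam : 0 < lam) (hlamE : 0 < lamE)
    (n : ℕ) (hn : 2 ≤ n) (v A : ℕ → ℝ)
    (hAlb : ∀ j : ℕ, 1 ≤ j → j < n → (j : ℝ) * ((n : ℝ) - j) * (lam / n) ≤ A j)
    (hAn : A n = 0)
    (hrec : ∀ j : ℕ, 1 ≤ j → j ≤ n →
      v j = (lamE + A j * v (j + 1)) / (2 * (j : ℝ) * lam / n + A j)) :
    v 1 ≤ lamE / (2 * lam) + ∑ i ∈ Finset.Ico 1 n,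
      lamE * n / (lam * i * ((n : ℝ) - i + 2)) := by
  have hn0 : (0 : ℝ) < n := by positivity
  have key : ∀ m : ℕ, ∀ j : ℕ, j + m = n → 1 ≤ j →
      0 < v j ∧ v j ≤ lamE / (2 * lam) + ∑ i ∈ Finset.Ico j n,
        lamE * n / (lam * i * ((n : ℝ) - i + 2)) := by
    intro m
    induction m with
    | zero =>
      intro j hjm hj1
      have hj : j = n := by omega
      subst hj
      have h := hrec j hj1 le_rfl
      rw [hAn] at h
      have hv : v j = lamE / (2 * lam) := by
        rw [h]
        field_simp
        ring
      refine ⟨by rw [hv]; positivity, ?_⟩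
      rw [hv, Finset.Ico_self, Finset.sum_empty, add_zero]
    | succ m ih =>
      intro j hjm hj1
      have hjn : j < n := by omega
      obtain ⟨hv'pos, hv'le⟩ := ih (j + 1) (by omega) (by omega)
      have hjR : (1 : ℝ) ≤ (j : ℝ) := by exact_mod_cast hj1
      have hnjR : (1 : ℝ) ≤ (n : ℝ) - j := by
        have : (j : ℝ) + 1 ≤ (n : ℝ) := by exact_mod_cast hjn
        linarith
      have halb := hAlb j hj1 hjn
      have hapos : 0 < A j := by
        have : 0 < (j : ℝ) * ((n : ℝ) - j) * (lam / n) := by positivity <;> linarith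
        nlinarith
      have hD : 0 < 2 * (j : ℝ) * lam / n := by positivity
      have hden : 0 < 2 * (j : ℝ) * lam / n + A j := by linarith
      have h := hrec j hj1 hjn.le
      have hpos : 0 < v j := by
        rw [h]
        exact div_pos (by nlinarith) hden
      have hb1 : v j ≤ lamE / (2 * (j : ℝ) * lam / n + A j) + v (j + 1) := by
        rw [h]
        have h2 : lamE + A j * v (j + 1)
            ≤ lamE + (2 * (j : ℝ) * lam / n + A j) * v (j + 1) := by nlinarith
        calc (lamE + A j * v (j + 1)) / (2 * (j : ℝ) * lam / n + A j)
            ≤ (lamE + (2 * (j : ℝ) * lam / n + A j) * v (j + 1)) /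
              (2 * (j : ℝ) * lam / n + A j) := by gcongr
          _ = lamE / (2 * (j : ℝ) * lam / n + A j) + v (j + 1) := by
              field_simp
      have hZ : 0 < lam * (j : ℝ) * ((n : ℝ) - j + 2) := by
        have : 0 < (n : ℝ) - j + 2 := by linarith
        positivity
      have hb2 : lamE / (2 * (j : ℝ) * lam / n + A j)
          ≤ lamE * n / (lam * (j : ℝ) * ((n : ℝ) - j + 2)) := by
        rw [div_le_div_iff₀ hden hZ]
        have hkey : lam * (j : ℝ) * ((n : ℝ) - j + 2) / n
            ≤ 2 * (j : ℝ) * lam / n + A j := by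
          have : lam * (j : ℝ) * ((n : ℝ) - j + 2) / n
              = 2 * (j : ℝ) * lam / n + (j : ℝ) * ((n : ℝ) - j) * (lam / n) := by
            field_simp
            ring
          rw [this]
          linarith
        have h3 := mul_le_mul_of_nonneg_left hkey
          (le_of_lt (by positivity : (0 : ℝ) < lamE * n))
        have h4 : lamE * n * (lam * (j : ℝ) * ((n : ℝ) - j + 2) / n)
            = lamE * (lam * (j : ℝ) * ((n : ℝ) - j + 2)) := by
          field_simp
        nlinarith
      have hsum : ∑ i ∈ Finset.Ico j n, lamE * n / (lam * i * ((n : ℝ) - i + 2))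
          = lamE * n / (lam * (j : ℝ) * ((n : ℝ) - j + 2))
            + ∑ i ∈ Finset.Ico (j + 1) n, lamE * n / (lam * i * ((n : ℝ) - i + 2)) :=
        Finset.sum_eq_sum_Ico_succ_bot hjn _
      refine ⟨hpos, ?_⟩
      rw [hsum]
      linarith
  have := key (n - 1) 1 (by omega) le_rfl
  exact this.2

/-- Scaling lemma, case `f(n) = n`: the version age of a single node is `O(ln n)`
in both the disconnected and the fully connected topologies. -/
theorem stmt_7 (lam lamE : ℝ) (hlam : 0 < lam) (hlamE : 0 < lamE) :
    ∃ C : ℝ, 0 < C ∧ ∀ n : ℕ, 2 ≤ n → ∀ v : ℕ → ℝ,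
      ((∀ j : ℕ, 1 ≤ j → j ≤ n →
          v j = (lamE + (j : ℝ) * ((n : ℝ) - j) * (lam / n) * v (j + 1)) /
            (2 * (j : ℝ) * lam / n + (j : ℝ) * ((n : ℝ) - j) * lam / n)) ∨
       (∀ j : ℕ, 1 ≤ j → j ≤ n →
          v j = (lamE + (j : ℝ) * ((n : ℝ) - j) * (lam / ((n : ℝ) - 1) + lam / n) * v (j + 1)) /
            (2 * (j : ℝ) * lam / n
              + (j : ℝ) * ((n : ℝ) - j) * (lam / ((n : ℝ) - 1) + lam / n)))) →
      v 1 ≤ C * Real.log n := by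
  refine ⟨8 * lamE / lam, by positivity, ?_⟩
  intro n hn v hv
  have hn0 : (0 : ℝ) < n := by positivity
  have hn2 : (2 : ℝ) ≤ (n : ℝ) := by exact_mod_cast hn
  have hn1 : (1 : ℝ) ≤ (n : ℝ) - 1 := by linarith
  -- extract the abstract coefficient function
  obtain ⟨A, hAlb, hAn, hrec⟩ : ∃ A : ℕ → ℝ,
      (∀ j : ℕ, 1 ≤ j → j < n → (j : ℝ) * ((n : ℝ) - j) * (lam / n) ≤ A j) ∧
      A n = 0 ∧
      (∀ j : ℕ, 1 ≤ j → j ≤ n →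
        v j = (lamE + A j * v (j + 1)) / (2 * (j : ℝ) * lam / n + A j)) := by
    rcases hv with h | h
    · refine ⟨fun j => (j : ℝ) * ((n : ℝ) - j) * (lam / n), fun j h1 h2 => le_rfl,
        by simp, fun j h1 h2 => by rw [h j h1 h2]; ring⟩
    · refine ⟨fun j => (j : ℝ) * ((n : ℝ) - j) * (lam / ((n : ℝ) - 1) + lam / n),
        ?_, by simp, fun j h1 h2 => by rw [h j h1 h2]⟩
      intro j h1 h2
      have hj0 : (0 : ℝ) ≤ (j : ℝ) := by positivity
      have hnj : (0 : ℝ) ≤ (n : ℝ) - j := by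
        have : (j : ℝ) ≤ (n : ℝ) := by exact_mod_cast h2.le
        linarith
      have h3 : (0 : ℝ) ≤ lam / ((n : ℝ) - 1) := by positivity
      nlinarith [mul_nonneg (mul_nonneg hj0 hnj) h3]
  have hmain := stmt7_aux lam lamE hlam hlamE n hn v A hAlb hAn hrec
  -- bound the sum by harmonic sums
  set S1 : ℝ := ∑ i ∈ Finset.Ico 1 n, (1 : ℝ) / (i : ℝ) with hS1
  set S2 : ℝ := ∑ i ∈ Finset.Ico 1 n, (1 : ℝ) / ((n : ℝ) - i + 2) with hS2
  have hptwise : ∀ i ∈ Finset.Ico 1 n,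
      lamE * n / (lam * i * ((n : ℝ) - i + 2))
        ≤ lamE / lam * ((1 : ℝ) / (i : ℝ) + (1 : ℝ) / ((n : ℝ) - i + 2)) := by
    intro i hi
    simp only [Finset.mem_Ico] at hi
    have hiR : (1 : ℝ) ≤ (i : ℝ) := by exact_mod_cast hi.1
    have hniR : (1 : ℝ) ≤ (n : ℝ) - i := by
      have : (i : ℝ) + 1 ≤ (n : ℝ) := by exact_mod_cast hi.2
      linarith
    have hs : (0 : ℝ) < (n : ℝ) - i + 2 := by linarith
    have heq : lamE / lam * ((1 : ℝ) / (i : ℝ) + (1 : ℝ) / ((n : ℝ) - i + 2))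
        = lamE * ((i : ℝ) + ((n : ℝ) - i + 2)) / (lam * i * ((n : ℝ) - i + 2)) := by
      field_simp
      ring
    rw [heq]
    gcongr
    linarith
  have hsum1 : ∑ i ∈ Finset.Ico 1 n, lamE * n / (lam * i * ((n : ℝ) - i + 2))
      ≤ lamE / lam * (S1 + S2) := by
    calc ∑ i ∈ Finset.Ico 1 n, lamE * n / (lam * i * ((n : ℝ) - i + 2))
        ≤ ∑ i ∈ Finset.Ico 1 n,
            lamE / lam * ((1 : ℝ) / (i : ℝ) + (1 : ℝ) / ((n : ℝ) - i + 2)) :=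
          Finset.sum_le_sum hptwise
      _ = lamE / lam * (S1 + S2) := by
          rw [hS1, hS2, ← Finset.sum_add_distrib, ← Finset.mul_sum]
  -- S1 ≤ 1 + log n
  have hS1le : S1 ≤ 1 + Real.log n := by
    have hsub : S1 ≤ ∑ i ∈ Finset.Ico 1 (n + 1), (1 : ℝ) / (i : ℝ) := by
      apply Finset.sum_le_sum_of_subset_of_nonneg
      · exact Finset.Ico_subset_Ico le_rfl (by omega)
      · intro i _ _; positivity
    exact hsub.trans (stmt7_harm n)
  -- S2 ≤ 1 + log (n+1) ≤ 1 + 2 log n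
  have hS2le : S2 ≤ 1 + 2 * Real.log n := by
    have hcast : S2 = ∑ i ∈ Finset.Ico 1 n, (1 : ℝ) / ((n + 2 - i : ℕ) : ℝ) := by
      apply Finset.sum_congr rfl
      intro i hi
      simp only [Finset.mem_Ico] at hi
      congr 1
      have : i ≤ n + 2 := by omega
      push_cast [Nat.cast_sub this]
      ring
    have hreindex : ∑ i ∈ Finset.Ico 1 n, (1 : ℝ) / ((n + 2 - i : ℕ) : ℝ)
        = ∑ k ∈ Finset.Ico 3 (n + 2), (1 : ℝ) / (k : ℝ) := by
      apply Finset.sum_nbij' (fun i => n + 2 - i) (fun k => n + 2 - k)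
      · intro a ha; simp only [Finset.mem_Ico] at *; omega
      · intro a ha; simp only [Finset.mem_Ico] at *; omega
      · intro a ha; simp only [Finset.mem_Ico] at *; omega
      · intro a ha; simp only [Finset.mem_Ico] at *; omega
      · intro a ha; rfl
    have hsub : ∑ k ∈ Finset.Ico 3 (n + 2), (1 : ℝ) / (k : ℝ)
        ≤ ∑ k ∈ Finset.Ico 1 (n + 2), (1 : ℝ) / (k : ℝ) := by
      apply Finset.sum_le_sum_of_subset_of_nonneg
      · exact Finset.Ico_subset_Ico (by omega) le_rfl
      · intro i _ _; positivity
    have hharm := stmt7_harm (n + 1)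
    have hlog : Real.log (n + 1) ≤ 2 * Real.log n := by
      have h1 : ((n : ℝ) + 1) ≤ (n : ℝ) ^ 2 := by nlinarith
      have h2 : Real.log ((n : ℝ) + 1) ≤ Real.log ((n : ℝ) ^ 2) :=
        Real.log_le_log (by linarith) h1
      rwa [Real.log_pow, Nat.cast_ofNat] at h2
    have : ((n : ℝ) + 1) = ((n + 1 : ℕ) : ℝ) := by push_cast; ring
    rw [hcast, hreindex]
    calc ∑ k ∈ Finset.Ico 3 (n + 2), (1 : ℝ) / (k : ℝ)
        ≤ ∑ k ∈ Finset.Ico 1 (n + 2), (1 : ℝ) / (k : ℝ) := hsub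
      _ ≤ 1 + Real.log (n + 1 : ℕ) := stmt7_harm (n + 1)
      _ ≤ 1 + 2 * Real.log n := by
          push_cast
          linarith
  -- combine everything
  have hL : (0.6931471803 : ℝ) ≤ Real.log n := by
    have := Real.log_two_gt_d9
    have h2 : Real.log 2 ≤ Real.log n := Real.log_le_log (by norm_num) hn2
    linarith
  have hr : 0 < lamE / lam := by positivity
  have hfin : lamE / (2 * lam) + lamE / lam * (S1 + S2) ≤ 8 * lamE / lam * Real.log n := by
    have he : lamE / (2 * lam) = (lamE / lam) / 2 := by
      rw [div_div, mul_comm lam 2]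
    rw [he]
    have hsum : S1 + S2 ≤ 2 + 3 * Real.log n := by linarith
    have h5 : lamE / lam * (S1 + S2) ≤ lamE / lam * (2 + 3 * Real.log n) :=
      mul_le_mul_of_nonneg_left hsum hr.le
    have h6 : 8 * lamE / lam * Real.log n = lamE / lam * (8 * Real.log n) := by ring
    rw [h6]
    nlinarith
  linarith
end

section
/- Let λ > 0, λ_e > 0, c > 0 be real numbers. There exists a constant C > 0 such that for every natural number n ≥ 2, if v : ℕ → ℝ satisfies, for every j with 1 ≤ j ≤ n, either the disconnected recursion v(j) = (λ_e + j(n−j)(λ/(c·ln n))·v(j+1)) / (jλ/n + jλ/(c·ln n) + j(n−j)λ/(c·ln n)) or the fully connected recursion v(j) = (λ_e + j(n−j)(λ/(n−1) + λ/(c·ln n))·v(j+1)) / (jλ/n + jλ/(c·ln n) + j(n−j)(λ/(n−1) + λ/(c·ln n))), then v(1) ≤ C·(ln n)²/n. (This is the f(n) = c·ln n case of the scaling lemma: v(1) = O((ln n)²/n) for both topologies.) -/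
open Finset

lemma stmt8_key_rec (lamE : ℝ) (hlamE : 0 ≤ lamE) (n : ℕ) (A B : ℕ → ℝ)
    (hA : ∀ j, 1 ≤ j → j ≤ n → 0 ≤ A j)
    (hB : ∀ j, 1 ≤ j → j ≤ n → 0 < B j)
    (hAn : A n = 0) (v : ℕ → ℝ)
    (hv : ∀ j, 1 ≤ j → j ≤ n → v j = (lamE + A j * v (j + 1)) / (B j + A j)) :
    ∀ d j : ℕ, 1 ≤ j → j + d = n →
      0 ≤ v j ∧ v j ≤ ∑ k ∈ Icc j n, lamE / (B k + A k) := by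
  intro d
  induction d with
  | zero =>
    intro j hj hjn
    have hjn' : j = n := by omega
    subst hjn'
    have hB' := hB j hj le_rfl
    have hAj : A j = 0 := hAn
    rw [hv j hj le_rfl, hAj, Icc_self, sum_singleton, hAj]
    simp only [zero_mul, add_zero]
    exact ⟨by positivity, le_rfl⟩
  | succ d ih =>
    intro j hj hjn
    obtain ⟨h0, hle⟩ := ih (j + 1) (by omega) (by omega)
    have hBj := hB j hj (by omega)
    have hAj := hA j hj (by omega)
    have hD : 0 < B j + A j := by linarith
    have hvj := hv j hj (by omega)
    have hnum : 0 ≤ lamE + A j * v (j + 1) := by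
      have := mul_nonneg hAj h0; linarith
    constructor
    · rw [hvj]; exact div_nonneg hnum hD.le
    · have hsum : ∑ k ∈ Icc j n, lamE / (B k + A k)
          = lamE / (B j + A j) + ∑ k ∈ Icc (j + 1) n, lamE / (B k + A k) := by
        rw [Icc_eq_cons_Ioc (by omega : j ≤ n), sum_cons, Finset.Icc_add_one_left_eq_Ioc]
      rw [hsum, hvj]
      have step : (lamE + A j * v (j + 1)) / (B j + A j)
          ≤ lamE / (B j + A j) + v (j + 1) := by
        rw [div_le_iff₀ hD, add_mul, div_mul_cancel₀ _ (ne_of_gt hD)]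
        nlinarith [mul_nonneg h0 hBj.le]
      linarith

/-- Scaling lemma, case `f(n) = c·ln n`: the version age of a single node is
`O((ln n)²/n)` in both the disconnected and the fully connected topologies. -/
theorem stmt_8 (lam lamE c : ℝ) (hlam : 0 < lam) (hlamE : 0 < lamE) (hc : 0 < c) :
    ∃ C : ℝ, 0 < C ∧ ∀ n : ℕ, 2 ≤ n → ∀ v : ℕ → ℝ,
      ((∀ j : ℕ, 1 ≤ j → j ≤ n →
          v j = (lamE + (j : ℝ) * ((n : ℝ) - j) * (lam / (c * Real.log n)) * v (j + 1)) /
            ((j : ℝ) * lam / n + (j : ℝ) * lam / (c * Real.log n)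
              + (j : ℝ) * ((n : ℝ) - j) * lam / (c * Real.log n))) ∨
       (∀ j : ℕ, 1 ≤ j → j ≤ n →
          v j = (lamE + (j : ℝ) * ((n : ℝ) - j)
                  * (lam / ((n : ℝ) - 1) + lam / (c * Real.log n)) * v (j + 1)) /
            ((j : ℝ) * lam / n + (j : ℝ) * lam / (c * Real.log n)
              + (j : ℝ) * ((n : ℝ) - j)
                  * (lam / ((n : ℝ) - 1) + lam / (c * Real.log n))))) →
      v 1 ≤ C * (Real.log n) ^ 2 / n := by
  refine ⟨7 * lamE * c / lam, by positivity, ?_⟩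
  intro n hn v hv
  set L := Real.log n with hLdef
  have hn2 : (2 : ℝ) ≤ (n : ℝ) := by exact_mod_cast hn
  have hn0 : (0 : ℝ) < (n : ℝ) := by linarith
  have hn0' : (n : ℝ) ≠ 0 := ne_of_gt hn0
  have hL2 : Real.log 2 ≤ L := Real.log_le_log (by norm_num) hn2
  have hlog2 : (0.6931471803 : ℝ) < Real.log 2 := Real.log_two_gt_d9
  have hL : 0 < L := lt_of_lt_of_le (by linarith) hL2
  have hcL : 0 < c * L := by positivity
  -- unify the two cases
  obtain ⟨r, hr, hvr⟩ : ∃ r : ℝ, lam / (c * L) ≤ r ∧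
      ∀ j : ℕ, 1 ≤ j → j ≤ n → v j =
        (lamE + (j : ℝ) * ((n : ℝ) - j) * r * v (j + 1)) /
          ((j : ℝ) * lam / n + (j : ℝ) * lam / (c * L) + (j : ℝ) * ((n : ℝ) - j) * r) := by
    rcases hv with h | h
    · exact ⟨lam / (c * L), le_refl _, fun j h1 h2 => by rw [h j h1 h2]; ring_nf⟩
    · refine ⟨lam / ((n : ℝ) - 1) + lam / (c * L), ?_, fun j h1 h2 => by rw [h j h1 h2]⟩
      have h1 : (0 : ℝ) < (n : ℝ) - 1 := by linarith
      have := div_nonneg hlam.le h1.le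
      linarith
  have hrpos : 0 < r := lt_of_lt_of_le (by positivity) hr
  set A : ℕ → ℝ := fun j => (j : ℝ) * ((n : ℝ) - j) * r with hAdef
  set B : ℕ → ℝ := fun j => (j : ℝ) * lam / n + (j : ℝ) * lam / (c * L) with hBdef
  -- apply the recursion lemma
  obtain ⟨-, hbound⟩ := stmt8_key_rec lamE hlamE.le n A B
    (fun j hj hjn => by
      have hj1 : (1 : ℝ) ≤ (j : ℝ) := by exact_mod_cast hj
      have hjn' : (j : ℝ) ≤ (n : ℝ) := by exact_mod_cast hjn
      have h5 : (0 : ℝ) ≤ (n : ℝ) - j := by linarith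
      simp only [hAdef]
      positivity)
    (fun j hj hjn => by
      have hj1 : (0 : ℝ) < (j : ℝ) := by exact_mod_cast hj
      simp only [hBdef]
      positivity)
    (by simp [hAdef])
    v (fun j h1 h2 => by simp only [hAdef, hBdef]; exact hvr j h1 h2)
    (n - 1) 1 le_rfl (by omega)
  have hsplit : ∑ k ∈ Icc 1 n, lamE / (B k + A k)
      = (∑ k ∈ Ico 1 n, lamE / (B k + A k)) + lamE / (B n + A n) := by
    rw [Icc_eq_cons_Ico (by omega : 1 ≤ n), sum_cons, add_comm]
  -- last term
  have hlast : lamE / (B n + A n) ≤ lamE * c * L / (lam * n) := by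
    have hAn : A n = 0 := by simp [hAdef]
    have hBn : (n : ℝ) * lam / (c * L) ≤ B n + A n := by
      have : (0 : ℝ) ≤ (n : ℝ) * lam / n := by positivity
      simp only [hAn, hBdef]; linarith
    calc lamE / (B n + A n) ≤ lamE / ((n : ℝ) * lam / (c * L)) :=
          div_le_div_of_nonneg_left hlamE.le (by positivity) hBn
      _ = lamE * c * L / (lam * n) := by field_simp
  -- middle terms
  have hmid : ∀ k ∈ Ico 1 n, lamE / (B k + A k)
      ≤ lamE * c * L / (lam * n) * ((k : ℝ)⁻¹ + ((n : ℝ) - k)⁻¹) := by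
    intro k hk
    simp only [mem_Ico] at hk
    have hk1 : (1 : ℝ) ≤ (k : ℝ) := by exact_mod_cast hk.1
    have hkn : (k : ℝ) + 1 ≤ (n : ℝ) := by exact_mod_cast hk.2
    have hknk : (1 : ℝ) ≤ (n : ℝ) - k := by linarith
    have hk0 : (0 : ℝ) < (k : ℝ) := by linarith
    have hnk0 : (0 : ℝ) < (n : ℝ) - k := by linarith
    have hlow : (k : ℝ) * ((n : ℝ) - k) * (lam / (c * L)) ≤ B k + A k := by
      have hAk : (k : ℝ) * ((n : ℝ) - k) * (lam / (c * L)) ≤ A k := by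
        simp only [hAdef]
        exact mul_le_mul_of_nonneg_left hr (by positivity)
      have hBk : (0 : ℝ) ≤ B k := by simp only [hBdef]; positivity
      exact hAk.trans (le_add_of_nonneg_left hBk)
    calc lamE / (B k + A k) ≤ lamE / ((k : ℝ) * ((n : ℝ) - k) * (lam / (c * L))) :=
          div_le_div_of_nonneg_left hlamE.le (by positivity) hlow
      _ = lamE * c * L / (lam * n) * ((k : ℝ)⁻¹ + ((n : ℝ) - k)⁻¹) := by
          field_simp
          ring
  have hsum1 : ∑ k ∈ Ico 1 n, lamE / (B k + A k)
      ≤ lamE * c * L / (lam * n) * ∑ k ∈ Ico 1 n, ((k : ℝ)⁻¹ + ((n : ℝ) - k)⁻¹) := by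
    rw [mul_sum]; exact sum_le_sum hmid
  -- reflection + harmonic bound
  have hrefl : ∑ k ∈ Ico 1 n, ((n : ℝ) - k)⁻¹ = ∑ k ∈ Ico 1 n, (k : ℝ)⁻¹ := by
    refine sum_nbij' (fun k => n - k) (fun k => n - k) ?_ ?_ ?_ ?_ ?_
    · intro a ha; simp only [mem_Ico] at *; omega
    · intro a ha; simp only [mem_Ico] at *; omega
    · intro a ha; simp only [mem_Ico] at ha; show n - (n - a) = a; omega
    · intro a ha; simp only [mem_Ico] at ha; show n - (n - a) = a; omega
    · intro a ha; simp only [mem_Ico] at ha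
      have h1 : ((n - a : ℕ) : ℝ) = (n : ℝ) - a := by
        push_cast [Nat.cast_sub (by omega : a ≤ n)]; ring
      rw [h1]
  have hIco : Finset.Ico 1 n = Finset.Icc 1 (n - 1) := by
    rw [← Finset.Ico_add_one_right_eq_Icc]; congr 1; omega
  have hharm : ∑ k ∈ Ico 1 n, (k : ℝ)⁻¹ ≤ 1 + L := by
    have h1 : ((harmonic (n - 1) : ℚ) : ℝ) = ∑ k ∈ Icc 1 (n - 1), (k : ℝ)⁻¹ := by
      rw [harmonic_eq_sum_Icc]; push_cast; rfl
    rw [hIco, ← h1]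
    calc ((harmonic (n - 1) : ℚ) : ℝ) ≤ 1 + Real.log (n - 1 : ℕ) := harmonic_le_one_add_log _
      _ ≤ 1 + L := by
        have h2 : (0 : ℝ) < ((n - 1 : ℕ) : ℝ) := by
          have : 1 ≤ n - 1 := by omega
          exact_mod_cast Nat.pos_of_ne_zero (by omega)
        have h3 : ((n - 1 : ℕ) : ℝ) ≤ (n : ℝ) := by
          push_cast [Nat.cast_sub (by omega : 1 ≤ n)]; linarith
        have := Real.log_le_log h2 h3
        linarith
  have hsum2 : ∑ k ∈ Ico 1 n, ((k : ℝ)⁻¹ + ((n : ℝ) - k)⁻¹) ≤ 2 * (1 + L) := by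
    rw [sum_add_distrib, hrefl]
    linarith
  -- assemble
  have hK : (0 : ℝ) ≤ lamE * c * L / (lam * n) := by positivity
  have hfinal : v 1 ≤ lamE * c * L / (lam * n) * (2 * (1 + L)) + lamE * c * L / (lam * n) := by
    have := mul_le_mul_of_nonneg_left hsum2 hK
    calc v 1 ≤ ∑ k ∈ Icc 1 n, lamE / (B k + A k) := hbound
      _ = (∑ k ∈ Ico 1 n, lamE / (B k + A k)) + lamE / (B n + A n) := hsplit
      _ ≤ lamE * c * L / (lam * n) * (2 * (1 + L)) + lamE * c * L / (lam * n) := by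
          have h4 := hsum1
          linarith
  have h35 : (3 : ℝ) ≤ 5 * L := by nlinarith
  have e1 : lamE * c * L / (lam * n) * (2 * (1 + L)) + lamE * c * L / (lam * n)
      = lamE * c * (3 * L + 2 * L ^ 2) / (lam * n) := by field_simp; ring
  have e2 : 7 * lamE * c / lam * L ^ 2 / n = lamE * c * (7 * L ^ 2) / (lam * n) := by
    field_simp
  rw [e2]
  rw [e1] at hfinal
  calc v 1 ≤ lamE * c * (3 * L + 2 * L ^ 2) / (lam * n) := hfinal
    _ ≤ lamE * c * (7 * L ^ 2) / (lam * n) := by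
        gcongr
        nlinarith [mul_nonneg hL.le (by linarith : (0 : ℝ) ≤ 5 * L - 3)]
end

section
/- Let n ≥ 2 be a natural number and let λ > 0, λ_e > 0, λ_m ≥ 0 be real numbers. Suppose v : Fin n → ℝ (indexing nodes 1,…,n) satisfies, for every j, v(j) = (λ_e + λ_m · ∑_{i ≠ j} v(i)) / (λ/n + (n−1)·λ_m). Then v(j) = n·λ_e/λ for every j; in particular the common value is independent of the exchange-mobility rate λ_m. -/
/-!
Adding `λ_m · v(j)` to both sides of the `j`-th equation (cleared of its denominator) gives
`v(j) · (λ/n + n λ_m) = λ_e + λ_m · ∑ᵢ v(i)`, whose right-hand side does not depend on `j`; so all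
nodes have the same age `c`. Substituting back, the mobility terms `(n - 1) λ_m c` cancel and leave
`c · λ/n = λ_e`.
-/

open Finset

lemma eq_of_forall_mul_eq_add_mul_sum_erase {ι : Type*} [Fintype ι] [DecidableEq ι]
    {v : ι → ℝ} {d e m : ℝ} (hdm : d + m ≠ 0)
    (hv : ∀ j, v j * d = e + m * ∑ i ∈ univ.erase j, v i) (i j : ι) : v i = v j := by
  have total : ∀ j, v j * (d + m) = e + m * ∑ i, v i := fun j => by
    rw [← add_sum_erase univ v (mem_univ j)]
    linear_combination hv j
  exact mul_right_cancel₀ hdm ((total i).trans (total j).symm)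

lemma sum_erase_eq_of_forall_eq {n : ℕ} {v : Fin n → ℝ} {j : Fin n} (hv : ∀ i, v i = v j) :
    ∑ i ∈ univ.erase j, v i = ((n : ℝ) - 1) * v j := by
  rw [sum_congr rfl fun i _ => hv i, sum_const, card_erase_of_mem (mem_univ j), card_univ,
    Fintype.card_fin, nsmul_eq_mul, Nat.cast_pred j.pos]

theorem stmt_16_general (n : ℕ) (lam lamE lamM : ℝ)
    (hlam : 0 < lam) (hlamM : 0 ≤ lamM)
    (v : Fin n → ℝ)
    (hv : ∀ j : Fin n,
      v j = (lamE + lamM * ∑ i ∈ Finset.univ.erase j, v i) /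
        (lam / n + ((n : ℝ) - 1) * lamM)) :
    ∀ j : Fin n, v j = (n : ℝ) * lamE / lam := by
  intro j
  have hn : (1 : ℝ) ≤ n := by exact_mod_cast j.pos
  have hD : 0 < lam / n + ((n : ℝ) - 1) * lamM := by
    have : 0 ≤ ((n : ℝ) - 1) * lamM := mul_nonneg (by linarith) hlamM
    linarith [div_pos hlam (by linarith : (0 : ℝ) < n)]
  have hv' : ∀ k, v k * (lam / n + ((n : ℝ) - 1) * lamM) =
      lamE + lamM * ∑ i ∈ univ.erase k, v i := fun k => (eq_div_iff hD.ne').1 (hv k)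
  have hconst : ∀ i, v i = v j :=
    fun i => eq_of_forall_mul_eq_add_mul_sum_erase (by linarith) hv' i j
  have hj := hv' j
  rw [sum_erase_eq_of_forall_eq hconst] at hj
  field_simp
  field_simp at hj
  linear_combination hj

/-- In a disconnected gossip network with exchange mobility, the steady-state
average version age of every node equals `n·λ_e/λ`, independently of the
exchange-mobility rate `λ_m`. -/
theorem stmt_16 (n : ℕ) (hn : 2 ≤ n) (lam lamE lamM : ℝ)
    (hlam : 0 < lam) (hlamE : 0 < lamE) (hlamM : 0 ≤ lamM)
    (v : Fin n → ℝ)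
    (hv : ∀ j : Fin n,
      v j = (lamE + lamM * ∑ i ∈ Finset.univ.erase j, v i) /
        (lam / n + ((n : ℝ) - 1) * lamM)) :
    ∀ j : Fin n, v j = (n : ℝ) * lamE / lam :=
  stmt_16_general n lam lamE lamM hlam hlamM v hv
end
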